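/- For any even integer m ≥ 2, κ₀ ∈ (0,1), s > 0, and real y, the integral ∫_{ℝ} |λ|^{κ₀-1} cos(λy) exp(-sλ^m) dλ is finite and equals (2/(m · s^{κ₀/m})) · Σ_{k=0}^∞ [Γ(κ₀/m + 2k/m)/Γ(2k+1)] · (-y²/s^{2/m})^k. -/

import Mathlib

/-!
As `m` is even the integrand is an even function of `λ`, so the integral is twice the one over
`(0, ∞)`. There we expand `cos (λ y)` in its power series and integrate term by term, each term
being a Gamma integral `∫₀^∞ λ^q e^{-sλ^m} dλ = s^{-(q+1)/m} Γ((q+1)/m) / m`. Dominated convergence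
applies because the series of absolute values sums to `λ^(κ₀-1) cosh (λ y) e^{-sλ^m}`, and
`cosh (λ y) ≤ e^{|y| λ}` is beaten by `e^{-sλ^m/2}` since `m ≥ 2`.
-/

open MeasureTheory Real Set

lemma Real.cosh_le_exp_abs (x : ℝ) : cosh x ≤ exp |x| := by
  rw [← cosh_abs, cosh_eq]
  linarith [exp_le_exp.2 (neg_le_self (abs_nonneg x))]

lemma MeasureTheory.IntegrableOn.comp_abs {f : ℝ → ℝ} (hf : IntegrableOn f (Ioi 0)) :
    Integrable (fun x => f |x|) := by
  have hIoi : IntegrableOn (fun x => f |x|) (Ioi 0) :=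
    hf.congr_fun (fun x hx => by rw [abs_of_pos hx]) measurableSet_Ioi
  have hIic : IntegrableOn (fun x => f |x|) (Iic 0) := by
    have hneg : MeasurableEmbedding (fun x : ℝ => -x) := (Homeomorph.neg ℝ).measurableEmbedding
    rw [← Measure.map_neg_eq_self (volume : Measure ℝ), hneg.integrableOn_map_iff]
    simp_rw [Function.comp_def, abs_neg, neg_preimage, neg_Iic, neg_zero]
    exact Iff.mpr integrableOn_Ici_iff_integrableOn_Ioi hIoi
  rw [← integrableOn_univ, ← Iic_union_Ioi (a := (0 : ℝ))]
  exact hIic.union hIoi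

open scoped Nat

section

variable {q s p : ℝ}

lemma mul_sub_mul_rpow_le (c : ℝ) (hs : 0 < s) (hp : 2 ≤ p) {x : ℝ} (hx : 0 ≤ x) :
    c * x - s * x ^ p ≤ s / 2 + c ^ 2 / (2 * s) - s / 2 * x ^ p := by
  have hsq : x ^ 2 ≤ x ^ p + 1 := by
    rcases le_total x 1 with h | h
    · nlinarith [rpow_nonneg hx p]
    · have := rpow_le_rpow_of_exponent_le h hp
      rw [rpow_two] at this
      linarith
  have hamgm : c * x ≤ s / 2 * x ^ 2 + c ^ 2 / (2 * s) := by
    have : s / 2 * x ^ 2 + c ^ 2 / (2 * s) - c * x = (s * x - c) ^ 2 / (2 * s) := by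
      field_simp; ring
    linarith [div_nonneg (sq_nonneg (s * x - c)) (by positivity : (0 : ℝ) ≤ 2 * s)]
  nlinarith

lemma integrableOn_rpow_mul_exp_mul_sub_mul_rpow (c : ℝ) (hq : -1 < q) (hs : 0 < s)
    (hp : 2 ≤ p) : IntegrableOn (fun x => x ^ q * exp (c * x - s * x ^ p)) (Ioi 0) := by
  refine ((integrableOn_rpow_mul_exp_neg_mul_rpow hq (by linarith) (half_pos hs)).const_mul
    (exp (s / 2 + c ^ 2 / (2 * s)))).mono' ?_ ?_
  · exact (ContinuousOn.aestronglyMeasurable (by fun_prop (disch := grind)) measurableSet_Ioi)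
  · refine (ae_restrict_iff' measurableSet_Ioi).2 (ae_of_all _ fun x (hx : 0 < x) => ?_)
    rw [norm_of_nonneg (by positivity), mul_left_comm, ← exp_add]
    gcongr
    linarith [mul_sub_mul_rpow_le c hs hp hx.le]

lemma cos_series_term_eq {x : ℝ} (hx : 0 < x) (q y a : ℝ) (k : ℕ) :
    (-1) ^ k * y ^ (2 * k) / (2 * k)! * (x ^ (q + 2 * k) * a) =
      x ^ q * ((-1) ^ k * (x * y) ^ (2 * k) / (2 * k)!) * a := by
  rw [rpow_add hx, show (2 * k : ℝ) = (2 * k : ℕ) by push_cast; ring, rpow_natCast, mul_pow]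
  ring

lemma hasSum_rpow_mul_cos_mul {x : ℝ} (hx : 0 < x) (q y a : ℝ) :
    HasSum (fun k : ℕ => (-1) ^ k * y ^ (2 * k) / (2 * k)! * (x ^ (q + 2 * k) * a))
      (x ^ q * cos (x * y) * a) := by
  simp_rw [cos_series_term_eq hx]
  exact ((hasSum_cos (x * y)).mul_left _).mul_right a

lemma hasSum_norm_rpow_mul_cos_mul {x : ℝ} (hx : 0 < x) (q y a : ℝ) :
    HasSum (fun k : ℕ => ‖(-1) ^ k * y ^ (2 * k) / (2 * k)! * (x ^ (q + 2 * k) * a)‖)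
      (x ^ q * cosh (x * y) * |a|) := by
  refine (((hasSum_cosh (x * y)).mul_left (x ^ q)).mul_right |a|).congr_fun fun k => ?_
  rw [cos_series_term_eq hx, norm_mul, norm_mul, norm_div, norm_mul, norm_pow, norm_neg, norm_one,
    one_pow, one_mul, norm_of_nonneg (rpow_nonneg hx.le q), Real.norm_natCast, norm_eq_abs,
    norm_eq_abs, abs_of_nonneg ((even_two_mul k).pow_nonneg _)]

lemma integrableOn_rpow_mul_cos_mul_exp_neg_mul_rpow (y : ℝ) (hq : -1 < q) (hs : 0 < s)
    (hp : 0 < p) : IntegrableOn (fun x => x ^ q * cos (x * y) * exp (-s * x ^ p)) (Ioi 0) := by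
  refine (integrableOn_rpow_mul_exp_neg_mul_rpow hq hp hs).mono' ?_ ?_
  · exact ContinuousOn.aestronglyMeasurable (by fun_prop (disch := grind)) measurableSet_Ioi
  · refine (ae_restrict_iff' measurableSet_Ioi).2 (ae_of_all _ fun x (hx : 0 < x) => ?_)
    rw [norm_mul, norm_mul, norm_of_nonneg (rpow_nonneg hx.le q), norm_of_nonneg (exp_pos _).le]
    gcongr
    exact mul_le_of_le_one_right (rpow_nonneg hx.le q) (abs_cos_le_one _)

lemma integrableOn_rpow_mul_cosh_mul_exp_neg_mul_rpow (y : ℝ) (hq : -1 < q) (hs : 0 < s)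
    (hp : 2 ≤ p) : IntegrableOn (fun x => x ^ q * cosh (x * y) * exp (-s * x ^ p)) (Ioi 0) := by
  refine (integrableOn_rpow_mul_exp_mul_sub_mul_rpow |y| hq hs hp).mono' ?_ ?_
  · exact ContinuousOn.aestronglyMeasurable (by fun_prop (disch := grind)) measurableSet_Ioi
  · refine (ae_restrict_iff' measurableSet_Ioi).2 (ae_of_all _ fun x (hx : 0 < x) => ?_)
    rw [norm_of_nonneg (by positivity), mul_assoc, sub_eq_add_neg, exp_add, ← neg_mul]
    gcongr
    simpa [abs_mul, abs_of_pos hx, mul_comm] using cosh_le_exp_abs (x * y)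

lemma hasSum_integral_rpow_mul_cos_mul_exp_neg_mul_rpow (y : ℝ) (hq : -1 < q) (hs : 0 < s)
    (hp : 2 ≤ p) :
    HasSum (fun k : ℕ => ∫ x in Ioi 0, (-1) ^ k * y ^ (2 * k) / (2 * k)! *
        (x ^ (q + 2 * k) * exp (-s * x ^ p)))
      (∫ x in Ioi 0, x ^ q * cos (x * y) * exp (-s * x ^ p)) := by
  have hae {P : ℝ → Prop} (h : ∀ x : ℝ, 0 < x → P x) : ∀ᵐ x ∂volume.restrict (Ioi 0), P x :=
    (ae_restrict_iff' measurableSet_Ioi).2 (ae_of_all _ h)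
  refine hasSum_integral_of_dominated_convergence (fun k x => ‖(-1) ^ k * y ^ (2 * k) / (2 * k)! *
      (x ^ (q + 2 * k) * exp (-s * x ^ p))‖) (fun k => ?_) (fun k => ae_of_all _ fun x => le_rfl)
    (hae fun x hx => (hasSum_norm_rpow_mul_cos_mul hx q y _).summable) ?_
    (hae fun x hx => hasSum_rpow_mul_cos_mul hx q y _)
  · exact ContinuousOn.aestronglyMeasurable (by fun_prop (disch := grind)) measurableSet_Ioi
  · refine (integrableOn_rpow_mul_cosh_mul_exp_neg_mul_rpow y hq hs hp).congr_fun_ae ?_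
    filter_upwards [hae fun x hx => (hasSum_norm_rpow_mul_cos_mul hx q y _).tsum_eq] with x hx
    rw [hx, abs_of_pos (exp_pos _)]

lemma Real.Gamma_two_mul_add_one (k : ℕ) : Gamma (2 * k + 1) = (2 * k)! := by
  exact_mod_cast Gamma_nat_eq_factorial (2 * k)

theorem integral_Ioi_rpow_mul_cos_mul_exp_neg_mul_rpow {κ : ℝ} (y : ℝ) (hκ : 0 < κ) (hs : 0 < s)
    (hp : 2 ≤ p) :
    ∫ x in Ioi 0, x ^ (κ - 1) * cos (x * y) * exp (-s * x ^ p) =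
      1 / (p * s ^ (κ / p)) *
        ∑' k : ℕ, Gamma (κ / p + 2 * k / p) / Gamma (2 * k + 1) * (-y ^ 2 / s ^ (2 / p)) ^ k := by
  rw [← (hasSum_integral_rpow_mul_cos_mul_exp_neg_mul_rpow y (by linarith) hs hp).tsum_eq,
    ← tsum_mul_left]
  refine tsum_congr fun k => ?_
  have hk : -1 < κ - 1 + 2 * k := by linarith [k.cast_nonneg (α := ℝ)]
  rw [integral_const_mul, integral_rpow_mul_exp_neg_mul_rpow (by linarith) hk hs,
    show (κ - 1 + 2 * k + 1) / p = κ / p + 2 * k / p by ring,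
    show -(κ - 1 + 2 * k + 1) / p = -(κ / p) + -(2 / p * k) by ring,
    rpow_add hs, rpow_neg hs.le, rpow_neg hs.le, rpow_mul hs.le, rpow_natCast,
    Gamma_two_mul_add_one, div_pow, neg_pow (y ^ 2), pow_mul]
  have : Gamma (κ / p + 2 * k / p) ≠ 0 := (Gamma_pos_of_pos (by positivity)).ne'
  field_simp

end

theorem singular_fourier_generalized_gaussian (m : ℕ) (hm : Even m) (hm2 : 2 ≤ m)
    (κ₀ s y : ℝ) (hκ : κ₀ ∈ Set.Ioo (0 : ℝ) 1) (hs : 0 < s) :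
    Integrable (fun lam : ℝ => |lam| ^ (κ₀ - 1) * Real.cos (lam * y) * Real.exp (-s * lam ^ m)) ∧
    ∫ lam : ℝ, |lam| ^ (κ₀ - 1) * Real.cos (lam * y) * Real.exp (-s * lam ^ m) =
      (2 / (m * s ^ (κ₀ / m))) *
        ∑' k : ℕ, Real.Gamma (κ₀ / m + 2 * k / m) / Real.Gamma (2 * k + 1) *
          (-y ^ 2 / s ^ ((2 : ℝ) / m)) ^ k := by
  have hp : (2 : ℝ) ≤ m := by exact_mod_cast hm2
  set G : ℝ → ℝ := fun x => x ^ (κ₀ - 1) * cos (x * y) * exp (-s * x ^ (m : ℝ)) with hG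
  have h_even : (fun lam : ℝ => |lam| ^ (κ₀ - 1) * cos (lam * y) * exp (-s * lam ^ m)) =
      fun lam => G |lam| := by
    funext lam
    simp only [hG, rpow_natCast, hm.pow_abs]
    rcases abs_choice lam with h | h <;> rw [h]
    rw [neg_mul lam, cos_neg]
  rw [h_even, integral_comp_abs (f := G), hG,
    integral_Ioi_rpow_mul_cos_mul_exp_neg_mul_rpow y hκ.1 hs hp]
  exact ⟨(integrableOn_rpow_mul_cos_mul_exp_neg_mul_rpow y (by linarith [hκ.1]) hs
    (by linarith)).comp_abs, by ring⟩
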